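/- Let P and Q be d-dimensional strongly blocked lattice-free polytopes in ℝ^d such that Q_I = A(P_I) for some affine unimodular transformation A ∈ Aff(ℤ^d), where P_I = conv(P ∩ ℤ^d) and Q_I = conv(Q ∩ ℤ^d) are the integer hulls. Then Q = A(P). -/

import Mathlib

open scoped BigOperators

noncomputable section

/-- A point of `ℝ^d` is integral if all its coordinates are integers. -/
def IsIntegralPoint {d : ℕ} (x : Fin d → ℝ) : Prop := ∀ i, ∃ n : ℤ, x i = (n : ℝ)

/-- The set `ℤ^d` of integral points of `ℝ^d`. -/
def latticePts (d : ℕ) : Set (Fin d → ℝ) := {x | IsIntegralPoint x}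

/-- A set `K ⊆ ℝ^d` is lattice-free if it is closed, convex, `d`-dimensional (nonempty
interior) and its interior contains no integral point. -/
def IsLatticeFree {d : ℕ} (K : Set (Fin d → ℝ)) : Prop :=
  IsClosed K ∧ Convex ℝ K ∧ (interior K).Nonempty ∧ interior K ∩ latticePts d = ∅

/-- A set is maximal lattice-free if it is lattice-free and not properly contained in
another lattice-free set. -/
def IsMaxLatticeFree {d : ℕ} (K : Set (Fin d → ℝ)) : Prop :=
  IsLatticeFree K ∧ ∀ K' : Set (Fin d → ℝ), IsLatticeFree K' → K ⊆ K' → K = K'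

/-- A polytope is the convex hull of a finite set of points. -/
def IsPolytope {d : ℕ} (P : Set (Fin d → ℝ)) : Prop :=
  ∃ V : Finset (Fin d → ℝ), P = convexHull ℝ (V : Set (Fin d → ℝ))

/-- A polyhedron is a finite intersection of closed halfspaces. -/
def IsPolyhedron {d : ℕ} (P : Set (Fin d → ℝ)) : Prop :=
  ∃ (n : ℕ) (c : Fin n → (Fin d → ℝ)) (b : Fin n → ℝ),
    P = {x | ∀ j, ∑ i, c j i * x i ≤ b j}

/-- The integer hull of a set: the convex hull of its integral points. -/
def intHull {d : ℕ} (K : Set (Fin d → ℝ)) : Set (Fin d → ℝ) :=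
  convexHull ℝ (K ∩ latticePts d)

/-- A polytope is integral if it is the convex hull of its integral points. -/
def IsIntegralPolytope {d : ℕ} (P : Set (Fin d → ℝ)) : Prop :=
  IsPolytope P ∧ P = intHull P

/-- A facet of a `d`-dimensional closed convex set in `ℝ^d` : a nonempty exposed face of
dimension `d - 1`. -/
def IsFacet {d : ℕ} (P F : Set (Fin d → ℝ)) : Prop :=
  IsExposed ℝ P F ∧ F.Nonempty ∧ Module.finrank ℝ (vectorSpan ℝ F) + 1 = d

/-- A facet is blocked if its relative interior contains an integral point. -/
def IsBlocked {d : ℕ} (F : Set (Fin d → ℝ)) : Prop :=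
  ∃ x ∈ intrinsicInterior ℝ F, IsIntegralPoint x

/-- A facet `F` of a `d`-dimensional lattice-free polyhedron in `ℝ^d` is strongly blocked
if its integer hull is `(d-1)`-dimensional and the relative interior of the integer hull
contains an integral point. -/
def IsStronglyBlockedFacet {d : ℕ} (P F : Set (Fin d → ℝ)) : Prop :=
  IsFacet P F ∧ Module.finrank ℝ (vectorSpan ℝ (intHull F)) + 1 = d ∧
    ∃ x ∈ intrinsicInterior ℝ (intHull F), IsIntegralPoint x

/-- A polyhedron is strongly blocked if all its facets are strongly blocked. -/
def IsStronglyBlocked {d : ℕ} (P : Set (Fin d → ℝ)) : Prop :=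
  ∀ F, IsFacet P F → IsStronglyBlockedFacet P F

/-- Membership in the family `L^d` of weakly maximal integral lattice-free polytopes:
integral lattice-free polytopes not properly contained in another integral
lattice-free polytope. -/
def MemL {d : ℕ} (P : Set (Fin d → ℝ)) : Prop :=
  IsIntegralPolytope P ∧ IsLatticeFree P ∧
    ∀ Q : Set (Fin d → ℝ), IsIntegralPolytope Q → IsLatticeFree Q → P ⊆ Q → P = Q

/-- Membership in the family `M^d` of strongly maximal integral lattice-free polytopes:
integral lattice-free polytopes not properly contained in another lattice-free set. -/
def MemM {d : ℕ} (P : Set (Fin d → ℝ)) : Prop :=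
  IsIntegralPolytope P ∧ IsLatticeFree P ∧
    ∀ K : Set (Fin d → ℝ), IsLatticeFree K → P ⊆ K → P = K

/-- An affine transformation of `ℝ^d` is unimodular if it maps `ℤ^d` onto `ℤ^d`. -/
def IsUnimodular {d : ℕ} (A : (Fin d → ℝ) ≃ᵃ[ℝ] (Fin d → ℝ)) : Prop :=
  A '' latticePts d = latticePts d

/-- The relation on subsets of `ℝ^d` of coinciding up to an affine unimodular
transformation. -/
def UnimodEquiv {d : ℕ} (P Q : Set (Fin d → ℝ)) : Prop :=
  ∃ A : (Fin d → ℝ) ≃ᵃ[ℝ] (Fin d → ℝ), IsUnimodular A ∧ Q = A '' P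

/-- `κ(a) = 1/a₁ + ⋯ + 1/a_d`. -/
def kappa {d : ℕ} (a : Fin d → ℝ) : ℝ := ∑ i, (a i)⁻¹

/-- The axis-aligned simplex `T(a) = conv {0, a₁ e₁, …, a_d e_d}`. -/
def axisSimplex {d : ℕ} (a : Fin d → ℝ) : Set (Fin d → ℝ) :=
  convexHull ℝ (insert 0 (Set.range fun i => a i • (Pi.single i 1 : Fin d → ℝ)))

/-- The map `φ` replacing the last component `t` by `t+1, t(t+1)`. -/
def phiMap {d : ℕ} (a : Fin (d + 1) → ℝ) : Fin (d + 2) → ℝ :=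
  Fin.snoc (Fin.snoc (Fin.init a) (a (Fin.last d) + 1))
    (a (Fin.last d) * (a (Fin.last d) + 1))

/-- The map `ψ` replacing the last component `t` by
`t+3, t(t+1), (t+1)(t+3), (t+1)(t+3)`. -/
def psiMap {d : ℕ} (a : Fin (d + 1) → ℝ) : Fin (d + 4) → ℝ :=
  Fin.snoc (Fin.snoc (Fin.snoc (Fin.snoc (Fin.init a) (a (Fin.last d) + 3))
    (a (Fin.last d) * (a (Fin.last d) + 1)))
    ((a (Fin.last d) + 1) * (a (Fin.last d) + 3)))
    ((a (Fin.last d) + 1) * (a (Fin.last d) + 3))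

/-- The map `ξ` replacing the last component `t` by `(3/2)t, 3t`. -/
def xiMap {d : ℕ} (a : Fin (d + 1) → ℝ) : Fin (d + 2) → ℝ :=
  Fin.snoc (Fin.snoc (Fin.init a) (3 / 2 * a (Fin.last d))) (3 * a (Fin.last d))

/-- The composition `η = ξ ∘ ψ ∘ φ`. -/
def etaMap {d : ℕ} (a : Fin (d + 1) → ℝ) : Fin (d + 6) → ℝ :=
  xiMap (psiMap (phiMap a))

/-- The set `A_d` of representations of `1` as a sum of `d` Egyptian fractions,
with components sorted in ascending order. -/
def EgyptSet (d : ℕ) : Set (Fin d → ℕ) :=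
  {a | (∀ i, 0 < a i) ∧ Monotone a ∧ ∑ i, ((a i : ℝ))⁻¹ = 1}

end

/-!
A strongly blocked lattice-free polytope `P` is recovered from its integer hull as the set of
points `x` such that `conv (P_I ∪ {x})` has no integral interior point, and this description
commutes with unimodular maps. For `x ∉ P`, choose a facet `F` of `P` beyond which `x` lies.
The integral point `z` in the relative interior of `F_I` is an interior point of
`conv (F_I ∪ {x, p})` for any `p ∈ P_I` strictly on the inner side of `F`; such a `p` exists,
since otherwise the integer hull of a second facet would span the hyperplane of `F` as well.
Facets beyond outside points are found as in the simplex method: pivot a separating functional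
until the vertices on which it is tight span the whole space.
-/

open Module Set Filter Topology

section Hyperplanes

variable {E : Type*} [AddCommGroup E] [Module ℝ E]

lemma mem_mk'_ker_iff {l : Dual ℝ E} {q y : E} :
    y ∈ AffineSubspace.mk' q (LinearMap.ker l) ↔ l y = l q := by
  simp [AffineSubspace.mem_mk', sub_eq_zero]

lemma sub_eq_mul_sub_of_forall_eq_imp {l l' : Dual ℝ E} {b b' : ℝ} {u : E} (hu : l u = 1)
    (h : ∀ w, l w = b → l' w = b') (w : E) : l' w - b' = l' u * (l w - b) := by
  have := h (w - (l w - b) • u) (by simp [hu])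
  simp only [map_sub, map_smul, smul_eq_mul] at this
  linarith

lemma coe_ne_zero_of_apply_lt [TopologicalSpace E] {l : E →L[ℝ] ℝ} {x y : E} (h : l x < l y) :
    (l : Dual ℝ E) ≠ 0 := fun h0 => by
  have hx := LinearMap.congr_fun h0 x
  have hy := LinearMap.congr_fun h0 y
  simp only [ContinuousLinearMap.coe_coe, LinearMap.zero_apply] at hx hy
  linarith

variable [FiniteDimensional ℝ E]

lemma mem_affineSpan_iff_of_finrank_vectorSpan {l : Dual ℝ E} (hl : l ≠ 0) {b : ℝ} {S : Set E}
    (hS : ∀ y ∈ S, l y = b) (hne : S.Nonempty)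
    (hdim : finrank ℝ (vectorSpan ℝ S) + 1 = finrank ℝ E) (y : E) :
    y ∈ affineSpan ℝ S ↔ l y = b := by
  obtain ⟨z, hz⟩ := hne
  have hle : affineSpan ℝ S ≤ AffineSubspace.mk' z (LinearMap.ker l) :=
    affineSpan_le.2 fun w hw => mem_mk'_ker_iff.2 ((hS w hw).trans (hS z hz).symm)
  have heq : affineSpan ℝ S = AffineSubspace.mk' z (LinearMap.ker l) := by
    refine AffineSubspace.ext_of_direction_eq ?_
      ⟨z, mem_affineSpan ℝ hz, AffineSubspace.self_mem_mk' z _⟩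
    refine Submodule.eq_of_le_of_finrank_eq (AffineSubspace.direction_le hle) ?_
    rw [direction_affineSpan, AffineSubspace.direction_mk']
    have := Dual.finrank_ker_add_one_of_ne_zero hl
    omega
  rw [heq, mem_mk'_ker_iff, hS z hz]

lemma finrank_vectorSpan_add_one_of_span_sub_eq_top {l : Dual ℝ E} (hl : l ≠ 0) {b : ℝ}
    {F T : Set E} {x v₀ : E} (hF : ∀ y ∈ F, l y = b) (hTF : T ⊆ F) (hv₀ : v₀ ∈ T)
    (hspan : Submodule.span ℝ ((· - x) '' T) = ⊤) :
    finrank ℝ (vectorSpan ℝ F) + 1 = finrank ℝ E := by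
  have hupper : vectorSpan ℝ F ≤ LinearMap.ker l := by
    rw [vectorSpan_def, Submodule.span_le]
    rintro _ ⟨y₁, hy₁, y₂, hy₂, rfl⟩
    simp [hF y₁ hy₁, hF y₂ hy₂]
  have htop : ⊤ ≤ vectorSpan ℝ F ⊔ Submodule.span ℝ {v₀ - x} := by
    rw [← hspan, Submodule.span_le]
    rintro _ ⟨v, hv, rfl⟩
    have hv' : v - v₀ ∈ vectorSpan ℝ F := vsub_mem_vectorSpan ℝ (hTF hv) (hTF hv₀)
    simp only [SetLike.mem_coe]
    rw [show v - x = (v - v₀) + (v₀ - x) by abel]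
    exact Submodule.add_mem_sup hv' (Submodule.mem_span_singleton_self _)
  have h1 := Submodule.finrank_mono hupper
  have h2 := (Submodule.finrank_mono htop).trans
    (Submodule.finrank_add_le_finrank_add_finrank _ _)
  have h3 : finrank ℝ (Submodule.span ℝ {v₀ - x}) ≤ 1 := (finrank_span_le_card _).trans (by simp)
  have := Dual.finrank_ker_add_one_of_ne_zero hl
  rw [finrank_top] at h2
  omega

end Hyperplanes

section TightSpan

variable {E : Type*} [AddCommGroup E] [Module ℝ E]

def tightSpan (W : Finset E) (l : Dual ℝ E) : Submodule ℝ E :=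
  Submodule.span ℝ {w | w ∈ W ∧ l w = -1}

lemma exists_dual_pos_of_span_eq_top {W : Set E} (hW : Submodule.span ℝ W = ⊤)
    {M : Submodule ℝ E} (hM : M ≠ ⊤) : ∃ g : Dual ℝ E, (∀ m ∈ M, g m = 0) ∧ ∃ w ∈ W, 0 < g w := by
  obtain ⟨w, hwW, hwM⟩ : ∃ w ∈ W, w ∉ M := by
    by_contra! h
    exact hM (top_le_iff.1 (hW ▸ Submodule.span_le.2 h))
  obtain ⟨f, hfw, hfM⟩ := M.exists_dual_map_eq_bot_of_notMem hwM inferInstance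
  have hf : ∀ m ∈ M, f m = 0 := fun m hm => by
    simpa [hfM] using Submodule.mem_map_of_mem (f := f) hm
  rcases hfw.lt_or_gt with hneg | hpos
  · exact ⟨-f, fun m hm => by simp [hf m hm], w, hwW, by simpa using hneg⟩
  · exact ⟨f, hf, w, hwW, hpos⟩

/-- A pivot step: move `l` along a functional `g` that vanishes on the tight span, until a new
inequality becomes tight. -/
lemma exists_tightSpan_gt {W : Finset E} (hW : Submodule.span ℝ (W : Set E) = ⊤)
    {l : Dual ℝ E} (hl : ∀ w ∈ W, l w ≤ -1) (htop : tightSpan W l ≠ ⊤) :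
    ∃ l' : Dual ℝ E, (∀ w ∈ W, l' w ≤ -1) ∧ tightSpan W l < tightSpan W l' := by
  classical
  obtain ⟨g, hgM, hgpos⟩ := exists_dual_pos_of_span_eq_top hW htop
  have hg : ∀ w ∈ W, l w = -1 → g w = 0 := fun w hw hlw =>
    hgM w (Submodule.subset_span ⟨hw, hlw⟩)
  set S := W.filter fun w => 0 < g w
  have hS : S.Nonempty := by
    obtain ⟨w, hw, hgw⟩ := hgpos
    exact ⟨w, Finset.mem_filter.2 ⟨hw, hgw⟩⟩
  set t := S.inf' hS fun w => (-1 - l w) / g w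
  obtain ⟨w₀, hw₀S, ht⟩ := S.exists_mem_eq_inf' hS fun w => (-1 - l w) / g w
  obtain ⟨hw₀, hgw₀⟩ := Finset.mem_filter.1 hw₀S
  have ht0 : 0 ≤ t := Finset.le_inf' _ _ fun w hw => by
    obtain ⟨hwW, hgw⟩ := Finset.mem_filter.1 hw
    exact div_nonneg (by linarith [hl w hwW]) hgw.le
  have htight : ∀ w ∈ W, l w = -1 → (l + t • g) w = -1 := fun w hw hlw => by
    simp [hlw, hg w hw hlw]
  refine ⟨l + t • g, fun w hw => ?_, lt_of_le_of_ne ?_ fun heq => ?_⟩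
  · rcases le_or_gt (g w) 0 with hgw | hgw
    · simp only [LinearMap.add_apply, LinearMap.smul_apply, smul_eq_mul]
      nlinarith [hl w hw]
    · have hle : t ≤ (-1 - l w) / g w := Finset.inf'_le _ (Finset.mem_filter.2 ⟨hw, hgw⟩)
      rw [le_div_iff₀ hgw] at hle
      simp only [LinearMap.add_apply, LinearMap.smul_apply, smul_eq_mul]
      linarith
  · exact Submodule.span_mono fun w hw => ⟨hw.1, htight w hw.1 hw.2⟩
  · have hnew : (l + t • g) w₀ = -1 := by
      simp only [LinearMap.add_apply, LinearMap.smul_apply, smul_eq_mul, t, ht]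
      field_simp
      ring
    have hmem : w₀ ∈ tightSpan W l := heq ▸ Submodule.subset_span ⟨hw₀, hnew⟩
    exact hgw₀.ne' (hgM w₀ hmem)

lemma exists_tightSpan_eq_top [FiniteDimensional ℝ E] {W : Finset E}
    (hW : Submodule.span ℝ (W : Set E) = ⊤) {l : Dual ℝ E} (hl : ∀ w ∈ W, l w ≤ -1) :
    ∃ l' : Dual ℝ E, (∀ w ∈ W, l' w ≤ -1) ∧ tightSpan W l' = ⊤ := by
  obtain ⟨_, ⟨l', hl', rfl⟩, hmax⟩ := set_has_maximal_iff_noetherian.2 inferInstance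
    (tightSpan W '' {l | ∀ w ∈ W, l w ≤ -1}) ⟨_, l, hl, rfl⟩
  refine ⟨l', hl', by_contra fun htop => ?_⟩
  obtain ⟨l'', hl'', hlt⟩ := exists_tightSpan_gt hW hl' htop
  exact hmax _ ⟨l'', hl'', rfl⟩ hlt

end TightSpan

section Facets

lemma span_sub_eq_top_of_affineSpan_eq_top {E : Type*} [AddCommGroup E] [Module ℝ E]
    {V : Set E} (hV : affineSpan ℝ V = ⊤) {x : E} (hx : x ∉ V) :
    Submodule.span ℝ ((· - x) '' V) = ⊤ := by
  have h : vectorSpan ℝ (insert x V) = ⊤ := by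
    have h' : affineSpan ℝ (insert x V) = ⊤ :=
      top_unique (hV ▸ affineSpan_mono ℝ (subset_insert x V))
    rw [← direction_affineSpan, h', AffineSubspace.direction_top]
  rwa [vectorSpan_eq_span_vsub_set_right_ne ℝ (mem_insert x V),
    insert_sdiff_of_mem _ (mem_singleton x), sdiff_singleton_eq_self hx] at h

lemma isExposed_setOf_eq_of_forall_le {E : Type*} [AddCommGroup E] [TopologicalSpace E]
    [Module ℝ E] {A : Set E} {l : E →L[ℝ] ℝ} {b : ℝ} (hle : ∀ y ∈ A, l y ≤ b)
    {v : E} (hvA : v ∈ A) (hv : l v = b) : IsExposed ℝ A {y | y ∈ A ∧ l y = b} := fun _ =>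
  ⟨l, Set.ext fun y => ⟨fun ⟨hyA, hy⟩ => ⟨hyA, fun z hz => hy ▸ hle z hz⟩,
    fun ⟨hyA, hy⟩ => ⟨hyA, le_antisymm (hle y hyA) (hv ▸ hy v hvA)⟩⟩⟩

lemma exists_dual_tight_span_eq_top {E : Type*} [NormedAddCommGroup E] [NormedSpace ℝ E]
    [FiniteDimensional ℝ E] {V : Finset E} (hV : affineSpan ℝ (V : Set E) = ⊤) {x : E}
    (hx : x ∉ convexHull ℝ (V : Set E)) :
    ∃ l : Dual ℝ E, (∀ v ∈ V, l v ≤ l x - 1) ∧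
      Submodule.span ℝ ((· - x) '' {v | v ∈ V ∧ l v = l x - 1}) = ⊤ := by
  classical
  set W := V.image (· - x)
  have hW : Submodule.span ℝ (W : Set E) = ⊤ := by
    rw [Finset.coe_image]
    exact span_sub_eq_top_of_affineSpan_eq_top hV fun h => hx (subset_convexHull ℝ _ h)
  obtain ⟨f, s, hfs, hsx⟩ := geometric_hahn_banach_closed_point (convex_convexHull ℝ _)
    (V.finite_toSet.isCompact_convexHull ℝ).isClosed hx
  have hW₀ : ∀ w ∈ W, ((f x - s)⁻¹ • (f : Dual ℝ E)) w ≤ -1 := by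
    simp only [W, Finset.forall_mem_image]
    intro v hv
    have := hfs v (subset_convexHull ℝ _ hv)
    simp only [LinearMap.smul_apply, ContinuousLinearMap.coe_coe, map_sub, smul_eq_mul]
    rw [← mul_sub, inv_mul_le_iff₀ (by linarith)]
    linarith
  obtain ⟨l, hlW, hltop⟩ := exists_tightSpan_eq_top hW hW₀
  have hT : (· - x) '' {v | v ∈ V ∧ l v = l x - 1} = {w | w ∈ W ∧ l w = -1} := by
    ext w
    simp only [W, mem_image, mem_ofPred_eq, Finset.mem_image]
    constructor
    · rintro ⟨v, ⟨hv, hlv⟩, rfl⟩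
      exact ⟨⟨v, hv, rfl⟩, by simp [hlv]⟩
    · rintro ⟨⟨v, hv, rfl⟩, hlv⟩
      exact ⟨v, ⟨hv, by simp only [map_sub] at hlv; linarith⟩, rfl⟩
  refine ⟨l, fun v hv => ?_, by rw [hT]; exact hltop⟩
  have := hlW _ (Finset.mem_image_of_mem _ hv)
  simp only [map_sub] at this
  linarith

variable {d : ℕ}

lemma IsLatticeFree.pos {K : Set (Fin d → ℝ)} (hK : IsLatticeFree K) : 0 < d := by
  obtain ⟨-, -, ⟨q, hq⟩, hfree⟩ := hK
  by_contra! hd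
  obtain rfl : d = 0 := by omega
  exact (eq_empty_iff_forall_notMem.1 hfree) q ⟨hq, fun i => i.elim0⟩

lemma IsPolytope.isCompact {P : Set (Fin d → ℝ)} (hP : IsPolytope P) : IsCompact P := by
  obtain ⟨V, rfl⟩ := hP
  exact V.finite_toSet.isCompact_convexHull ℝ

theorem IsPolytope.exists_facet_lt {P : Set (Fin d → ℝ)} (hP : IsPolytope P)
    (hint : (interior P).Nonempty) (hd : 0 < d) {x : Fin d → ℝ} (hx : x ∉ P) :
    ∃ (l : (Fin d → ℝ) →L[ℝ] ℝ) (b : ℝ),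
      (∀ y ∈ P, l y ≤ b) ∧ b < l x ∧ IsFacet P {y | y ∈ P ∧ l y = b} := by
  obtain ⟨V, rfl⟩ := hP
  obtain ⟨l, hlV, hspan⟩ :=
    exists_dual_tight_span_eq_top (affineSpan_eq_top_of_nonempty_interior hint) hx
  set T := {v | v ∈ V ∧ l v = l x - 1}
  obtain ⟨v₀, hv₀, hlv₀⟩ : T.Nonempty := by
    rw [nonempty_iff_ne_empty]
    rintro hTe
    rw [hTe, image_empty, Submodule.span_empty] at hspan
    have := congrArg (fun M : Submodule ℝ (Fin d → ℝ) => finrank ℝ M) hspan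
    simp only [finrank_bot, finrank_top, finrank_fin_fun] at this
    omega
  have hle : ∀ y ∈ convexHull ℝ (V : Set (Fin d → ℝ)), l y ≤ l x - 1 :=
    fun y hy => convexHull_min hlV (convex_halfSpace_le l.isLinear _) hy
  have hl : l ≠ 0 := by
    rintro rfl
    simp at hlv₀
  refine ⟨LinearMap.toContinuousLinearMap l, l x - 1, hle, by simp,
    isExposed_setOf_eq_of_forall_le hle (subset_convexHull ℝ _ hv₀) hlv₀,
    ⟨v₀, subset_convexHull ℝ _ hv₀, hlv₀⟩, ?_⟩
  have hdim := finrank_vectorSpan_add_one_of_span_sub_eq_top hl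
    (F := {y | y ∈ convexHull ℝ (V : Set (Fin d → ℝ)) ∧ l y = l x - 1}) (fun y hy => hy.2)
    (T := T) (fun v hv => ⟨subset_convexHull ℝ _ hv.1, hv.2⟩) ⟨hv₀, hlv₀⟩ hspan
  rwa [finrank_fin_fun] at hdim

end Facets

section Caps

variable {E : Type*} [NormedAddCommGroup E] [NormedSpace ℝ E]

lemma eq_zero_of_interior_nonempty_of_forall_eq [FiniteDimensional ℝ E] {S : Set E}
    (hS : (interior S).Nonempty) {l : Dual ℝ E} {b : ℝ} (h : ∀ y ∈ S, l y = b) : l = 0 := by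
  obtain ⟨q, hq⟩ := hS
  have hle : affineSpan ℝ (interior S) ≤ AffineSubspace.mk' q (LinearMap.ker l) :=
    affineSpan_le.2 fun y hy =>
      mem_mk'_ker_iff.2 ((h y (interior_subset hy)).trans (h q (interior_subset hq)).symm)
  ext v
  have := mem_mk'_ker_iff.1
    (hle (isOpen_interior.affineSpan_eq_top ⟨q, hq⟩ ▸ AffineSubspace.mem_top ℝ _ (q + v)))
  simpa using this

lemma eventually_mem_of_mem_intrinsicInterior {S : Set E} {z : E}
    (hz : z ∈ intrinsicInterior ℝ S) : ∀ᶠ y in 𝓝 z, y ∈ affineSpan ℝ S → y ∈ S := by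
  obtain ⟨w, hw, rfl⟩ := mem_intrinsicInterior.1 hz
  exact eventually_nhdsWithin_iff.1
    ((eventually_nhds_subtype_iff _ w _).1 (mem_interior_iff_mem_nhds.1 hw))

/-- Write `y = (1 - c y) • w y + c y • x` with `w y` on the hyperplane `{l = b}`; `w` is
continuous with `w z = z`. -/
lemma eventually_mem_convexHull_insert {l : E →L[ℝ] ℝ} {b : ℝ} {S : Set E} {z x : E}
    (hz : l z = b) (hS : ∀ᶠ y in 𝓝 z, l y = b → y ∈ S) (hx : b < l x) :
    ∀ᶠ y in 𝓝 z, b ≤ l y → y ∈ convexHull ℝ (insert x S) := by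
  set c : E → ℝ := fun y => (l y - b) / (l x - b)
  set w : E → E := fun y => (1 - c y)⁻¹ • (y - c y • x)
  have hc : Continuous c := by fun_prop
  have hcz : c z = 0 := by simp [c, hz]
  have hw : Tendsto w (𝓝 z) (𝓝 z) := by
    have : ContinuousAt w z := by
      refine ((continuousAt_const.sub hc.continuousAt).inv₀ (by simp [hcz])).smul ?_
      exact continuousAt_id.sub (hc.continuousAt.smul continuousAt_const)
    simpa [w, hcz] using this.tendsto
  have hc1 : ∀ᶠ y in 𝓝 z, c y < 1 :=
    hc.continuousAt.eventually_lt continuousAt_const (by simp [hcz])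
  filter_upwards [hw.eventually hS, hc1] with y hwS hcy hby
  have hne : 1 - c y ≠ 0 := by linarith
  have hly : l y - b = c y * (l x - b) := by
    simp only [c]
    field_simp [(sub_pos.2 hx).ne']
  have hlw : l (w y) = b := by
    simp only [w, map_smul, map_sub, smul_eq_mul]
    rw [inv_mul_eq_iff_eq_mul₀ hne]
    linarith
  have hy : y = (1 - c y) • w y + c y • x := by
    simp only [w, smul_smul, mul_inv_cancel₀ hne, one_smul, sub_add_cancel]
  rw [hy]
  exact (convex_convexHull ℝ _) (subset_convexHull ℝ _ (mem_insert_of_mem x (hwS hlw)))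
    (subset_convexHull ℝ _ (mem_insert x S)) (by linarith) (div_nonneg (by linarith) (by linarith))
    (by ring)

lemma mem_interior_convexHull_insert_insert {l : E →L[ℝ] ℝ} {b : ℝ} {S : Set E} {z x p : E}
    (hz : l z = b) (hS : ∀ᶠ y in 𝓝 z, l y = b → y ∈ S) (hx : b < l x) (hp : l p < b) :
    z ∈ interior (convexHull ℝ (insert x (insert p S))) := by
  have hS' : ∀ᶠ y in 𝓝 z, (-l) y = -b → y ∈ S := by
    filter_upwards [hS] with y hy hyb
    exact hy (neg_inj.1 hyb)
  rw [mem_interior_iff_mem_nhds]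
  filter_upwards [eventually_mem_convexHull_insert hz hS hx,
    eventually_mem_convexHull_insert (by simp [hz]) hS' (neg_lt_neg hp)] with y hx' hp'
  rcases le_total b (l y) with hby | hby
  · exact convexHull_mono (insert_subset_insert (subset_insert p S)) (hx' hby)
  · refine convexHull_mono ?_ (hp' (neg_le_neg hby))
    exact insert_subset (mem_insert_of_mem x (mem_insert p S))
      ((subset_insert p S).trans (subset_insert x _))

end Caps

section LatticeFree

variable {d : ℕ}

lemma intHull_subset {K : Set (Fin d → ℝ)} (hK : Convex ℝ K) : intHull K ⊆ K :=
  convexHull_min inter_subset_left hK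

lemma intHull_mono {K L : Set (Fin d → ℝ)} (h : K ⊆ L) : intHull K ⊆ intHull L :=
  convexHull_mono (inter_subset_inter_left _ h)

def latticeFreeExtensions (R : Set (Fin d → ℝ)) : Set (Fin d → ℝ) :=
  {x | interior (convexHull ℝ (insert x R)) ∩ latticePts d = ∅}

lemma subset_latticeFreeExtensions {K R : Set (Fin d → ℝ)} (hK : Convex ℝ K)
    (hfree : interior K ∩ latticePts d = ∅) (hR : R ⊆ K) : K ⊆ latticeFreeExtensions R :=
  fun _ hx => subset_empty_iff.1 <| hfree ▸
    inter_subset_inter_left _ (interior_mono (convexHull_min (insert_subset hx hR) hK))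

lemma latticeFreeExtensions_image {A : (Fin d → ℝ) ≃ᵃ[ℝ] (Fin d → ℝ)} (hA : IsUnimodular A)
    (R : Set (Fin d → ℝ)) : latticeFreeExtensions (A '' R) = A '' latticeFreeExtensions R := by
  have key : ∀ x, A x ∈ latticeFreeExtensions (A '' R) ↔ x ∈ latticeFreeExtensions R := by
    intro x
    have hconv : ∀ s, convexHull ℝ (A '' s) = A '' convexHull ℝ s := fun s =>
      (A.toAffineMap.image_convexHull s).symm
    have hint : ∀ s, interior (A '' s) = A '' interior s := fun s =>
      (A.toContinuousAffineEquiv.toHomeomorph.image_interior s).symm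
    simp only [latticeFreeExtensions, mem_ofPred_eq]
    rw [← image_insert_eq, hconv, hint, ← hA, ← image_inter A.injective, image_eq_empty, hA]
  ext y
  obtain ⟨x, rfl⟩ := A.surjective y
  rw [key, A.injective.mem_set_image]

lemma apply_eq_of_mem_intHull {K : Set (Fin d → ℝ)} {l : (Fin d → ℝ) →L[ℝ] ℝ} {b : ℝ}
    (hK : ∀ y ∈ K, l y = b) {y : Fin d → ℝ} (hy : y ∈ intHull K) : l y = b :=
  convexHull_min (fun v hv => hK v hv.1) (convex_hyperplane l.isLinear b) hy

/-- Otherwise the integer hull of the facet beyond a point `y` below `P` would span `{l = b}`,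
so the functional of that facet would be a negative multiple of `l - b`, squeezing `P` into
`{l = b}`. -/
lemma IsStronglyBlocked.exists_mem_intHull_lt {P : Set (Fin d → ℝ)} (hpoly : IsPolytope P)
    (hlf : IsLatticeFree P) (hsb : IsStronglyBlocked P) {l : (Fin d → ℝ) →L[ℝ] ℝ} {b : ℝ}
    (hl : (l : Dual ℝ (Fin d → ℝ)) ≠ 0) (hle : ∀ y ∈ P, l y ≤ b) :
    ∃ p ∈ intHull P, l p < b := by
  by_contra! hge
  have hPI : ∀ p ∈ intHull P, l p = b := fun p hp =>
    le_antisymm (hle p (intHull_subset hlf.2.1 hp)) (hge p hp)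
  obtain ⟨u, hu⟩ : ∃ u, l u = 1 := LinearMap.surjective hl 1
  obtain ⟨q, hq⟩ := hlf.2.2.1
  have hqP := interior_subset hq
  obtain ⟨m, hm⟩ := hpoly.isCompact.bddBelow_image l.continuous.continuousOn
  set y := q - (l q - m + 1) • u
  have hly : l y = m - 1 := by simp only [y, map_sub, map_smul, hu, smul_eq_mul]; ring
  have hyP : y ∉ P := fun hy => by linarith [hm (mem_image_of_mem l hy)]
  obtain ⟨l', b', hle', hly', hF'⟩ := hpoly.exists_facet_lt hlf.2.2.1 hlf.pos hyP
  obtain ⟨-, hdim', z', hz', -⟩ := hsb _ hF'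
  set FI := intHull {y | y ∈ P ∧ l' y = b'}
  have hne : FI.Nonempty := ⟨z', intrinsicInterior_subset hz'⟩
  have hdim : finrank ℝ (vectorSpan ℝ FI) + 1 = finrank ℝ (Fin d → ℝ) :=
    hdim'.trans (finrank_fin_fun ℝ).symm
  have hFI : ∀ v ∈ FI, l v = b := fun v hv => hPI v (intHull_mono (fun _ h => h.1) hv)
  have hFI' : ∀ v ∈ FI, l' v = b' := fun v => apply_eq_of_mem_intHull fun _ h => h.2
  have hl' := coe_ne_zero_of_apply_lt ((hle' q hqP).trans_lt hly')
  have hlevel : ∀ w, l w = b → l' w = b' := fun w hw =>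
    (mem_affineSpan_iff_of_finrank_vectorSpan hl' hFI' hne hdim w).1
      ((mem_affineSpan_iff_of_finrank_vectorSpan hl hFI hne hdim w).2 hw)
  have hprop : ∀ w, l' w - b' = l' u * (l w - b) := sub_eq_mul_sub_of_forall_eq_imp hu hlevel
  have hc : l' u < 0 := by
    have hmq : m ≤ b := (hm (mem_image_of_mem l hqP)).trans (hle q hqP)
    nlinarith [hprop y]
  refine hl (eq_zero_of_interior_nonempty_of_forall_eq (b := b) ⟨q, hq⟩ fun w hw => ?_)
  show l w = b
  nlinarith [hprop w, hle w hw, hle' w hw]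

theorem IsStronglyBlocked.latticeFreeExtensions_intHull_subset {P : Set (Fin d → ℝ)}
    (hpoly : IsPolytope P) (hlf : IsLatticeFree P) (hsb : IsStronglyBlocked P) :
    latticeFreeExtensions (intHull P) ⊆ P := by
  intro x hx
  by_contra hxP
  obtain ⟨l, b, hle, hlx, hF⟩ := hpoly.exists_facet_lt hlf.2.2.1 hlf.pos hxP
  obtain ⟨-, hdim, z, hz, hzint⟩ := hsb _ hF
  set F := {y | y ∈ P ∧ l y = b}
  obtain ⟨v₀, -, hv₀⟩ := hF.2.1
  have hl := coe_ne_zero_of_apply_lt (hv₀ ▸ hlx)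
  have hFI : ∀ y ∈ intHull F, l y = b := fun y => apply_eq_of_mem_intHull fun _ h => h.2
  have hnear : ∀ᶠ y in 𝓝 z, l y = b → y ∈ intHull F := by
    filter_upwards [eventually_mem_of_mem_intrinsicInterior hz] with y hy hyb
    exact hy ((mem_affineSpan_iff_of_finrank_vectorSpan hl hFI ⟨z, intrinsicInterior_subset hz⟩
      (hdim.trans (finrank_fin_fun ℝ).symm) y).2 hyb)
  obtain ⟨p, hp, hpb⟩ := hsb.exists_mem_intHull_lt hpoly hlf hl hle
  have hzint' := mem_interior_convexHull_insert_insert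
    (hFI z (intrinsicInterior_subset hz)) hnear hlx hpb
  have hsub : insert x (insert p (intHull F)) ⊆ insert x (intHull P) :=
    insert_subset_insert (insert_subset hp (intHull_mono fun _ h => h.1))
  exact (eq_empty_iff_forall_notMem.1 hx) z ⟨interior_mono (convexHull_mono hsub) hzint', hzint⟩

theorem IsStronglyBlocked.eq_latticeFreeExtensions_intHull {P : Set (Fin d → ℝ)}
    (hpoly : IsPolytope P) (hlf : IsLatticeFree P) (hsb : IsStronglyBlocked P) :
    P = latticeFreeExtensions (intHull P) :=
  (subset_latticeFreeExtensions hlf.2.1 hlf.2.2.2 (intHull_subset hlf.2.1)).antisymm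
    (hsb.latticeFreeExtensions_intHull_subset hpoly hlf)

end LatticeFree

/-- if `P, Q` are strongly blocked lattice-free polytopes in `ℝ^d` with
`Q_I = A (P_I)` for a unimodular affine transformation `A`, then `Q = A (P)`. -/
theorem statement9 {d : ℕ} (P Q : Set (Fin d → ℝ))
    (hPpoly : IsPolytope P) (hPlf : IsLatticeFree P) (hPsb : IsStronglyBlocked P)
    (hQpoly : IsPolytope Q) (hQlf : IsLatticeFree Q) (hQsb : IsStronglyBlocked Q)
    (A : (Fin d → ℝ) ≃ᵃ[ℝ] (Fin d → ℝ)) (hA : IsUnimodular A)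
    (h : intHull Q = A '' intHull P) :
    Q = A '' P :=
  calc Q = latticeFreeExtensions (intHull Q) := hQsb.eq_latticeFreeExtensions_intHull hQpoly hQlf
    _ = A '' latticeFreeExtensions (intHull P) := by rw [h, latticeFreeExtensions_image hA]
    _ = A '' P := by rw [← hPsb.eq_latticeFreeExtensions_intHull hPpoly hPlf]
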